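/- Matrix inversion (Gessel–Stanton): Suppose β_k = ∑_{j=0}^{k} α_j / ( (Q;Q)_{k-j} (AQ;Q)_{k+j} ) for 0 ≤ k ≤ n-1. Then for 0 ≤ m ≤ n-1, α_m = ∑_{k=0}^{m} (-1)^{m+k} β_k · (AQ;Q)_{m+k-1} / (Q;Q)_{m-k} · (1 - A Q^{2m}) · Q^{\binom{m-k}{2}}. -/

import Mathlib

open Finset

noncomputable section

/-- The field of rational functions over `ℚ` in two variables `A`, `Q`. -/
abbrev K : Type := FractionRing (MvPolynomial (Fin 2) ℚ)

/-- The formal variable `A`. -/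
def A : K := algebraMap (MvPolynomial (Fin 2) ℚ) K (MvPolynomial.X 0)

/-- The formal variable `Q`. -/
def Q : K := algebraMap (MvPolynomial (Fin 2) ℚ) K (MvPolynomial.X 1)

/-- The `Q`-Pochhammer symbol `(X;Q)_r = ∏_{j=0}^{r-1} (1 - X Q^j)`. -/
def pch (X Qb : K) (r : ℕ) : K := ∏ j ∈ Finset.range r, (1 - X * Qb ^ j)

/-- The `Q`-Pochhammer symbol with integer index: for negative index `-r` it is
`(X;Q)_{-r} = 1 / ∏_{j=1}^{r} (1 - X Q^{-j})`. -/
def pchZ (X Qb : K) : ℤ → K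
  | Int.ofNat r => pch X Qb r
  | Int.negSucc r => (∏ j ∈ Finset.range (r + 1), (1 - X * Qb ^ (-(j : ℤ) - 1)))⁻¹

/-!
Substituting `β` and exchanging the two sums, the coefficient of `α j` on the right is
`∑_{k=j}^{m} G m k * F k j`, where `F`, `G` are the two lower-triangular kernels. On the diagonal
this is `(AQ;Q)_{2m-1} (1 - A Q^{2m}) / (AQ;Q)_{2m} = 1`. For `j < m` put `N = m - j`, `k = j + i`:
up to a factor not depending on `i`, the term is `(-1)^{N-i} Q^{binom(N-i,2)} [N, i]_Q * P(Q^i)`,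
where `P x = ∏_{s<N-1} (1 - A Q^{2j+s+1} x)` comes from `(AQ;Q)_{m+k-1} / (AQ;Q)_{k+j}` and has
degree `< N`. By the `q`-binomial theorem these weights are the coefficients of
`∏_{t<N} (x - Q^t)`, which vanishes at `x = Q^d` for every `d < N`, so they annihilate `P`.
-/

open Polynomial

section QBinomial

variable {R : Type*} [CommRing R]

-- The Gaussian binomial coefficient `[n, k]_q`.
def qBinom (q : R) : ℕ → ℕ → R
  | _, 0 => 1
  | 0, _ + 1 => 0
  | n + 1, k + 1 => qBinom q n k + q ^ (k + 1) * qBinom q n (k + 1)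

@[simp]
lemma qBinom_zero_right (q : R) (n : ℕ) : qBinom q n 0 = 1 := by
  cases n <;> rfl

lemma qBinom_succ_succ (q : R) (n k : ℕ) :
    qBinom q (n + 1) (k + 1) = qBinom q n k + q ^ (k + 1) * qBinom q n (k + 1) := rfl

lemma qBinom_of_lt (q : R) : ∀ {n k : ℕ}, n < k → qBinom q n k = 0
  | 0, _ + 1, _ => rfl
  | n + 1, k + 1, h => by
    rw [qBinom_succ_succ, qBinom_of_lt q (by omega), qBinom_of_lt q (by omega), mul_zero, add_zero]

@[simp]
lemma qBinom_self (q : R) : ∀ n : ℕ, qBinom q n n = 1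
  | 0 => rfl
  | n + 1 => by rw [qBinom_succ_succ, qBinom_self q n, qBinom_of_lt q n.lt_succ_self]; ring

def signedQBinom (q : R) (n k : ℕ) : R :=
  (-1) ^ (n - k) * q ^ ((n - k).choose 2) * qBinom q n k

lemma signedQBinom_of_lt (q : R) {n k : ℕ} (h : n < k) : signedQBinom q n k = 0 := by
  rw [signedQBinom, qBinom_of_lt q h, mul_zero]

lemma signedQBinom_succ_zero (q : R) (n : ℕ) :
    signedQBinom q (n + 1) 0 = -(q ^ n * signedQBinom q n 0) := by
  simp only [signedQBinom, qBinom_zero_right, Nat.sub_zero, Nat.choose_succ_succ',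
    Nat.choose_one_right, pow_succ, pow_add]
  ring

lemma signedQBinom_succ_succ (q : R) (n k : ℕ) :
    signedQBinom q (n + 1) (k + 1) = signedQBinom q n k - q ^ n * signedQBinom q n (k + 1) := by
  rcases lt_or_ge n k with hnk | hkn
  · rw [signedQBinom_of_lt q hnk, signedQBinom_of_lt q (by omega), signedQBinom_of_lt q (by omega)]
    ring
  obtain ⟨l, rfl⟩ := Nat.exists_eq_add_of_le hkn
  rcases l with _ | l
  · simp [signedQBinom, qBinom_of_lt q k.lt_succ_self]
  · simp only [signedQBinom, qBinom_succ_succ, show k + (l + 1) + 1 - (k + 1) = l + 1 by omega,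
      show k + (l + 1) - k = l + 1 by omega, show k + (l + 1) - (k + 1) = l by omega,
      Nat.choose_succ_succ', Nat.choose_one_right, pow_succ, pow_add]
    ring

theorem prod_range_sub_pow_eq_sum (q x : R) (n : ℕ) :
    ∏ t ∈ range n, (x - q ^ t) = ∑ k ∈ range (n + 1), signedQBinom q n k * x ^ k := by
  induction n with
  | zero => simp [signedQBinom]
  | succ n ih =>
    set S := ∑ k ∈ range (n + 1), signedQBinom q n k * x ^ k
    have hshift : ∑ k ∈ range (n + 1), signedQBinom q n (k + 1) * x ^ (k + 1) =
        S - signedQBinom q n 0 := by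
      have h := sum_range_succ' (fun k ↦ signedQBinom q n k * x ^ k) (n + 1)
      rw [sum_range_succ, signedQBinom_of_lt q n.lt_succ_self, zero_mul, add_zero, pow_zero,
        mul_one] at h
      exact eq_sub_of_add_eq h.symm
    have hmul : ∑ k ∈ range (n + 1), signedQBinom q n k * x ^ (k + 1) = S * x := by
      rw [sum_mul]
      exact sum_congr rfl fun k _ ↦ by ring
    simp only [prod_range_succ, ih, sum_range_succ' _ (n + 1), signedQBinom_succ_succ,
      signedQBinom_succ_zero, sub_mul, sum_sub_distrib, mul_assoc, ← mul_sum, hshift, hmul]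
    ring

theorem sum_signedQBinom_mul_eval_eq_zero (q : R) {n : ℕ} {p : R[X]} (hp : p.natDegree < n) :
    ∑ k ∈ range (n + 1), signedQBinom q n k * p.eval (q ^ k) = 0 := by
  simp_rw [eval_eq_sum_range' hp, mul_sum]
  rw [sum_comm]
  refine sum_eq_zero fun d hd ↦ ?_
  calc ∑ k ∈ range (n + 1), signedQBinom q n k * (p.coeff d * (q ^ k) ^ d)
      = p.coeff d * ∑ k ∈ range (n + 1), signedQBinom q n k * (q ^ d) ^ k := by
        rw [mul_sum]
        exact sum_congr rfl fun k _ ↦ by rw [← pow_mul, ← pow_mul, mul_comm k d]; ring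
    _ = 0 := by
        rw [← prod_range_sub_pow_eq_sum, prod_eq_zero hd (sub_self _), mul_zero]

theorem sum_signedQBinom_mul_prod_eq_zero (q : R) (c : ℕ → R) (n : ℕ) :
    ∑ k ∈ range (n + 2),
      signedQBinom q (n + 1) k * ∏ s ∈ range n, (1 - c s * q ^ k) = 0 := by
  let p : R[X] := ∏ s ∈ range n, (C (-c s) * X + C 1)
  have hp : p.natDegree < n + 1 := by
    refine Nat.lt_succ_of_le ((natDegree_prod_le _ _).trans ?_)
    simpa using sum_le_sum fun s (_ : s ∈ range n) ↦ natDegree_linear_le (a := -c s) (b := 1)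
  convert sum_signedQBinom_mul_eval_eq_zero q hp using 3 with k
  simp [p, eval_prod, sub_eq_neg_add]

end QBinomial

theorem eq_sum_of_lowerTriangular_inverse {R : Type*} [CommSemiring R] {F G : ℕ → ℕ → R}
    (hdiag : ∀ m, G m m * F m m = 1)
    (hoff : ∀ j m, j < m → ∑ k ∈ Ico j (m + 1), G m k * F k j = 0)
    {n : ℕ} {α β : ℕ → R} (hβ : ∀ k < n, β k = ∑ j ∈ range (k + 1), F k j * α j)
    {m : ℕ} (hm : m < n) :
    α m = ∑ k ∈ range (m + 1), G m k * β k := by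
  symm
  calc ∑ k ∈ range (m + 1), G m k * β k
      = ∑ k ∈ Ico 0 (m + 1), ∑ j ∈ Ico 0 (k + 1), G m k * F k j * α j := by
        rw [← range_eq_Ico]
        refine sum_congr rfl fun k hk ↦ ?_
        rw [hβ k (by have := mem_range.1 hk; omega), ← range_eq_Ico, mul_sum]
        simp only [mul_assoc]
    _ = ∑ j ∈ range (m + 1), (∑ k ∈ Ico j (m + 1), G m k * F k j) * α j := by
        rw [← sum_Ico_Ico_comm, range_eq_Ico]
        simp only [sum_mul]
    _ = α m := by
        rw [sum_eq_single_of_mem m (self_mem_range_succ m)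
          fun j hj _ ↦ by rw [hoff j m (by have := mem_range.1 hj; omega), zero_mul]]
        simp [hdiag]

lemma pch_zero (X q : K) : pch X q 0 = 1 := prod_range_zero _

lemma pch_succ (X q : K) (r : ℕ) : pch X q (r + 1) = pch X q r * (1 - X * q ^ r) :=
  prod_range_succ _ _

lemma pch_add (X q : K) (a b : ℕ) :
    pch X q (a + b) = pch X q a * ∏ s ∈ range b, (1 - X * q ^ (a + s)) :=
  prod_range_add _ _ _

lemma pchZ_natCast (X q : K) (n : ℕ) : pchZ X q n = pch X q n := rfl

lemma qBinom_mul_pch (q : K) (n : ℕ) :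
    ∀ k l, k + l = n → qBinom q n k * (pch q q k * pch q q l) = pch q q n := by
  induction n with
  | zero =>
    rintro k l h
    obtain ⟨rfl, rfl⟩ : k = 0 ∧ l = 0 := by omega
    simp [pch_zero]
  | succ n ih =>
    rintro (_ | k) (_ | l) h
    · omega
    · simp [pch_zero, ← h]
    · simp [pch_zero, ← h]
    · obtain rfl : n = k + l + 1 := by omega
      have h₁ := ih k (l + 1) (by omega)
      have h₂ := ih (k + 1) l (by omega)
      rw [pch_succ] at h₁ h₂
      rw [qBinom_succ_succ, pch_succ, pch_succ, pch_succ]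
      linear_combination (1 - q * q ^ k) * h₁ + q ^ (k + 1) * (1 - q * q ^ l) * h₂

lemma one_sub_algebraMap_ne_zero {p : MvPolynomial (Fin 2) ℚ}
    (hp : MvPolynomial.constantCoeff p = 0) :
    (1 : K) - algebraMap (MvPolynomial (Fin 2) ℚ) K p ≠ 0 := by
  rw [← map_one (algebraMap (MvPolynomial (Fin 2) ℚ) K), ← map_sub, Ne,
    IsFractionRing.to_map_eq_zero_iff]
  intro h
  simpa [hp] using congrArg MvPolynomial.constantCoeff h

lemma Q_ne_zero : Q ≠ 0 := by
  rw [Q, Ne, IsFractionRing.to_map_eq_zero_iff]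
  exact MvPolynomial.X_ne_zero 1

lemma one_sub_A_mul_Q_pow_ne_zero (s : ℕ) : 1 - A * Q ^ s ≠ 0 := by
  rw [A, Q, ← map_pow, ← map_mul]
  exact one_sub_algebraMap_ne_zero (by simp)

lemma pch_Q_Q_ne_zero (r : ℕ) : pch Q Q r ≠ 0 :=
  prod_ne_zero_iff.2 fun j _ ↦ by
    rw [← pow_succ', Q, ← map_pow]
    exact one_sub_algebraMap_ne_zero (by simp)

lemma pch_AQ_Q_ne_zero (r : ℕ) : pch (A * Q) Q r ≠ 0 :=
  prod_ne_zero_iff.2 fun j _ ↦ by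
    simpa [mul_assoc, ← pow_succ'] using one_sub_A_mul_Q_pow_ne_zero (j + 1)

lemma pchZ_AQ_sub_one_mul (s : ℕ) :
    pchZ (A * Q) Q (s - 1) * (1 - A * Q ^ s) = pch (A * Q) Q s := by
  rcases s with _ | s
  · -- `(AQ;Q)_{-1} = (1 - A)⁻¹`
    show (∏ j ∈ range 1, (1 - A * Q * Q ^ (-(j : ℤ) - 1)))⁻¹ * (1 - A * Q ^ 0) =
      pch (A * Q) Q 0
    have := one_sub_A_mul_Q_pow_ne_zero 0
    simp_all [pch_zero, Q_ne_zero]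
  · rw [Nat.cast_succ, add_sub_cancel_right, pchZ_natCast, pch_succ, mul_assoc, ← pow_succ']

-- The kernels `F` (with `β = F α`) and `G` of the inversion, `gs` standing for Gessel–Stanton.
def gsCoeff (k j : ℕ) : K := (pch Q Q (k - j) * pch (A * Q) Q (k + j))⁻¹

def gsInvCoeff (m k : ℕ) : K :=
  (-1) ^ (m + k) * pchZ (A * Q) Q ((m : ℤ) + k - 1) * (1 - A * Q ^ (2 * m)) *
    Q ^ ((m - k).choose 2) / pch Q Q (m - k)

lemma gsInvCoeff_mul_gsCoeff_self (m : ℕ) : gsInvCoeff m m * gsCoeff m m = 1 := by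
  rw [gsInvCoeff, gsCoeff, Nat.sub_self, pch_zero, Nat.choose_zero_succ, pow_zero,
    show (m : ℤ) + m = ((2 * m : ℕ) : ℤ) by push_cast; ring, ← two_mul, pow_mul, neg_one_sq,
    one_pow, one_mul, mul_one, div_one, one_mul, pchZ_AQ_sub_one_mul,
    mul_inv_cancel₀ (pch_AQ_Q_ne_zero _)]

lemma gsInvCoeff_mul_gsCoeff_of_lt (j d i : ℕ) (hi : i ≤ d + 1) :
    gsInvCoeff (j + (d + 1)) (j + i) * gsCoeff (j + i) j =
      (1 - A * Q ^ (2 * (j + (d + 1)))) / pch Q Q (d + 1) *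
        (signedQBinom Q (d + 1) i * ∏ s ∈ range d, (1 - A * Q ^ (2 * j + s + 1) * Q ^ i)) := by
  obtain ⟨l, hl⟩ := Nat.exists_eq_add_of_le hi
  have hpchZ : pchZ (A * Q) Q (((j + (d + 1) : ℕ) : ℤ) + ((j + i : ℕ) : ℤ) - 1) =
      pch (A * Q) Q (j + i + j) * ∏ s ∈ range d, (1 - A * Q ^ (2 * j + s + 1) * Q ^ i) := by
    rw [show ((j + (d + 1) : ℕ) : ℤ) + ((j + i : ℕ) : ℤ) - 1 = ((j + i + j + d : ℕ) : ℤ) by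
        push_cast; ring,
      pchZ_natCast, pch_add]
    exact congrArg _ (prod_congr rfl fun s _ ↦ by ring)
  have hsign : (-1 : K) ^ (j + (d + 1) + (j + i)) = (-1) ^ l := by
    rw [show j + (d + 1) + (j + i) = l + 2 * (j + i) by omega, pow_add, pow_mul, neg_one_sq,
      one_pow, mul_one]
  have hbinom : qBinom Q (d + 1) i = pch Q Q (d + 1) / (pch Q Q i * pch Q Q l) :=
    eq_div_of_mul_eq (mul_ne_zero (pch_Q_Q_ne_zero i) (pch_Q_Q_ne_zero l))
      (qBinom_mul_pch Q (d + 1) i l hl.symm)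
  rw [gsInvCoeff, gsCoeff, signedQBinom, hpchZ, hsign, hbinom,
    show j + (d + 1) - (j + i) = l by omega, show j + i - j = i by omega,
    show d + 1 - i = l by omega]
  generalize ∏ s ∈ range d, (1 - A * Q ^ (2 * j + s + 1) * Q ^ i) = P
  have := pch_Q_Q_ne_zero i
  have := pch_Q_Q_ne_zero l
  have := pch_Q_Q_ne_zero (d + 1)
  have := pch_AQ_Q_ne_zero (j + i + j)
  field_simp

lemma sum_gsInvCoeff_mul_gsCoeff_of_lt {j m : ℕ} (h : j < m) :
    ∑ k ∈ Ico j (m + 1), gsInvCoeff m k * gsCoeff k j = 0 := by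
  obtain ⟨d, rfl⟩ : ∃ d, m = j + (d + 1) := ⟨m - j - 1, by omega⟩
  rw [sum_Ico_eq_sum_range, show j + (d + 1) + 1 - j = d + 2 by omega,
    sum_congr rfl fun i hi ↦
      gsInvCoeff_mul_gsCoeff_of_lt j d i (Nat.lt_succ_iff.1 (mem_range.1 hi)),
    ← mul_sum,
    sum_signedQBinom_mul_prod_eq_zero Q (fun s ↦ A * Q ^ (2 * j + s + 1)) d, mul_zero]

/-- Matrix inversion (Gessel–Stanton): if
`β_k = ∑_{j=0}^{k} α_j / ( (Q;Q)_{k-j} (AQ;Q)_{k+j} )` for `0 ≤ k ≤ n-1`, then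
`α_m = ∑_{k=0}^{m} (-1)^{m+k} β_k (AQ;Q)_{m+k-1} / (Q;Q)_{m-k} · (1-AQ^{2m}) Q^{binom(m-k,2)}`
for `0 ≤ m ≤ n-1`. -/
theorem gessel_stanton_inversion (n : ℕ) (α β : ℕ → K)
    (hβ : ∀ k, k < n →
      β k = ∑ j ∈ Finset.range (k + 1), α j / (pch Q Q (k - j) * pch (A * Q) Q (k + j))) :
    ∀ m, m < n →
      α m = ∑ k ∈ Finset.range (m + 1),
        (-1 : K) ^ (m + k) * β k * pchZ (A * Q) Q ((m : ℤ) + (k : ℤ) - 1) /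
          pch Q Q (m - k) * (1 - A * Q ^ (2 * m)) * Q ^ ((m - k).choose 2) := by
  intro m hm
  have hβ' : ∀ k < n, β k = ∑ j ∈ range (k + 1), gsCoeff k j * α j := fun k hk ↦ by
    rw [hβ k hk]
    exact sum_congr rfl fun j _ ↦ by rw [gsCoeff, div_eq_inv_mul]
  rw [eq_sum_of_lowerTriangular_inverse gsInvCoeff_mul_gsCoeff_self
    (fun _ _ ↦ sum_gsInvCoeff_mul_gsCoeff_of_lt) hβ' hm]
  exact sum_congr rfl fun k _ ↦ by rw [gsInvCoeff]; ring

end
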